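/- arXiv:2403.02275 — 2 statements merged into one kernel-verified Lean document; each statement's English description precedes it below -/
import Mathlib

section
/- Let G = (L ⊔ R, E) be an (r, Δ, c)-weak expander with c > 0, and let J ⊆ R with |J| ≤ cr/2. Then any two closures of J (i.e., (r, J)-contained sets of maximal size) coincide; in other words, the closure of J is unique. -/
/-! Expansion forces every `(r, J)`-contained set to have at most `r / 2` elements, so the union
of two closures has at most `r` elements. Since `∂(I₁ ∪ I₂) ⊆ ∂I₁ ∪ ∂I₂`, that union is again
contained, and maximality makes it equal to each of the two closures. -/

open Finset

variable {L R : Type*} [Fintype L] [Fintype R] [DecidableEq L] [DecidableEq R]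

/-- The set of neighbours of `I ⊆ L` in the bipartite graph with adjacency `A`. -/
def nbhd (A : L → R → Prop) [∀ a b, Decidable (A a b)] (I : Finset L) : Finset R :=
  Finset.univ.filter (fun b => ∃ a ∈ I, A a b)

/-- The boundary of `I ⊆ L`: vertices of `R` adjacent to exactly one vertex of `I`. -/
def bdry (A : L → R → Prop) [∀ a b, Decidable (A a b)] (I : Finset L) : Finset R :=
  Finset.univ.filter (fun b => (I.filter (fun a => A a b)).card = 1)

/-- Degree of a left vertex. -/
def ldeg (A : L → R → Prop) [∀ a b, Decidable (A a b)] (a : L) : ℕ :=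
  (Finset.univ.filter (fun b => A a b)).card

/-- `(r, Δ, c)`-boundary expander. -/
def IsBoundaryExpander (A : L → R → Prop) [∀ a b, Decidable (A a b)] (r Δ : ℕ) (c : ℝ) : Prop :=
  (∀ a : L, ldeg A a ≤ Δ) ∧
  ∀ I : Finset L, I.card ≤ r → c * I.card ≤ ((bdry A I).card : ℝ)

/-- `I` is `(r, J)`-contained: `|I| ≤ r` and `∂(I) ⊆ J`. -/
def IsContained (A : L → R → Prop) [∀ a b, Decidable (A a b)] (r : ℕ) (J : Finset R) (I : Finset L) : Prop :=
  I.card ≤ r ∧ bdry A I ⊆ J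

/-- `I` is a closure of `J`: an `(r, J)`-contained set of maximal size. -/
def IsClosure (A : L → R → Prop) [∀ a b, Decidable (A a b)] (r : ℕ) (J : Finset R) (I : Finset L) : Prop :=
  IsContained A r J I ∧ ∀ I' : Finset L, IsContained A r J I' → I'.card ≤ I.card

/-- `(r, Δ, c)`-weak (boundary) expander. -/
def IsWeakExpander (A : L → R → Prop) [∀ a b, Decidable (A a b)] (r Δ : ℕ) (c : ℝ) : Prop :=
  (∀ a : L, ldeg A a ≤ Δ) ∧
  (∀ I : Finset L, I.Nonempty → (I.card : ℝ) ≤ r / 2 → (bdry A I).Nonempty) ∧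
  (∀ I : Finset L, (r : ℝ) / 2 < I.card → I.card ≤ r → c * I.card ≤ ((bdry A I).card : ℝ))

omit [Fintype L] in
theorem bdry_union_subset (A : L → R → Prop) [∀ a b, Decidable (A a b)] (I₁ I₂ : Finset L) :
    bdry A (I₁ ∪ I₂) ⊆ bdry A I₁ ∪ bdry A I₂ := by
  intro b hb
  simp only [bdry, mem_filter, mem_univ, true_and, mem_union, filter_union, card_eq_one] at hb ⊢
  obtain ⟨a, ha⟩ := hb
  rcases subset_singleton_iff.1 (ha ▸ subset_union_left) with h₁ | h₁
  · rcases subset_singleton_iff.1 (ha ▸ subset_union_right) with h₂ | h₂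
    · simp [h₁, h₂] at ha
    · exact .inr ⟨a, h₂⟩
  · exact .inl ⟨a, h₁⟩

section Closure

variable {A : L → R → Prop} [∀ a b, Decidable (A a b)] {r : ℕ} {J : Finset R} {I I₁ I₂ : Finset L}

omit [Fintype L] in
theorem IsContained.union (h₁ : IsContained A r J I₁) (h₂ : IsContained A r J I₂)
    (hr : (I₁ ∪ I₂).card ≤ r) : IsContained A r J (I₁ ∪ I₂) :=
  ⟨hr, (bdry_union_subset A I₁ I₂).trans (union_subset h₁.2 h₂.2)⟩

omit [Fintype L] [DecidableEq L] [DecidableEq R] in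
/-- A contained set of size above `r / 2` would have more than `c r / 2 ≥ |J|` boundary
vertices, all inside `J`. -/
theorem IsContained.card_le_half {Δ : ℕ} {c : ℝ} (hc : 0 < c) (hexp : IsWeakExpander A r Δ c)
    (hJ : (J.card : ℝ) ≤ c * r / 2) (hI : IsContained A r J I) : (I.card : ℝ) ≤ r / 2 := by
  by_contra! hbig
  have hexpand : c * I.card ≤ (bdry A I).card := hexp.2.2 I hbig hI.1
  have hbdry : ((bdry A I).card : ℝ) ≤ J.card := by exact_mod_cast card_le_card hI.2
  have : c * (r / 2) < c * I.card := mul_lt_mul_of_pos_left hbig hc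
  linarith

omit [Fintype L] [DecidableEq R] in
theorem IsClosure.subset_of_isContained_union (h₁ : IsClosure A r J I₁)
    (h : IsContained A r J (I₁ ∪ I₂)) : I₂ ⊆ I₁ :=
  (eq_of_subset_of_card_le subset_union_left (h₁.2 _ h)).symm ▸ subset_union_right

end Closure

/-- In an `(r, Δ, c)`-weak expander, for `|J| ≤ cr/2` any two closures
of `J` coincide. -/
theorem weak_closure_unique (A : L → R → Prop) [∀ a b, Decidable (A a b)]
    (r Δ : ℕ) (c : ℝ) (hc : 0 < c)
    (hexp : IsWeakExpander A r Δ c)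
    (J : Finset R) (hJ : (J.card : ℝ) ≤ c * r / 2)
    (I₁ I₂ : Finset L) (h₁ : IsClosure A r J I₁) (h₂ : IsClosure A r J I₂) :
    I₁ = I₂ := by
  have hsmall₁ := h₁.1.card_le_half hc hexp hJ
  have hsmall₂ := h₂.1.card_le_half hc hexp hJ
  have hr : (I₁ ∪ I₂).card ≤ r := by
    exact_mod_cast calc ((I₁ ∪ I₂).card : ℝ)
        ≤ I₁.card + I₂.card := by exact_mod_cast card_union_le I₁ I₂
      _ ≤ r / 2 + r / 2 := add_le_add hsmall₁ hsmall₂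
      _ = r := add_halves _
  have hunion := h₁.1.union h₂.1 hr
  exact (h₂.subset_of_isContained_union (union_comm I₁ I₂ ▸ hunion)).antisymm
    (h₁.subset_of_isContained_union hunion)
end

section
/- Let G = (L ⊔ R, E) be an (r, Δ, c)-weak expander and J ⊆ R with |Ext(J)| ≤ cr/2, where Ext(J) := J ∪ N(Cl(J)). Then Cl(Ext(J)) = Cl(J). -/
/-!
A set `K` with `|K| ≤ r` whose boundary lies in a set of size at most `cr/2` cannot have
`|K| > r/2`, since then `|∂K| ≥ c|K| > cr/2`. Hence both `Cl(J)` and `Cl(Ext J)` have size at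
most `r/2`, so their union is still admissible for `Ext J` (a unique neighbour of the union is
either a neighbour of `Cl(J)` or a unique neighbour of `Cl(Ext J)`), and maximality gives
`Cl(J) ⊆ Cl(Ext J)`. Conversely, a unique neighbour of `Cl(Ext J)` lying in `N(Cl J)` is a unique
neighbour of `Cl(J)`, hence lies in `J`; so `Cl(Ext J)` is admissible for `J` and maximality of
`Cl(J)` closes the argument.
-/

open Finset

variable {L R : Type*} [Fintype L] [Fintype R] [DecidableEq L] [DecidableEq R]

section

omit [Fintype L] [DecidableEq L] [DecidableEq R]

variable {A : L → R → Prop} [∀ a b, Decidable (A a b)]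

theorem mem_nbhd {I : Finset L} {b : R} : b ∈ nbhd A I ↔ ∃ a ∈ I, A a b := by
  simp [nbhd]

theorem mem_bdry {I : Finset L} {b : R} : b ∈ bdry A I ↔ (I.filter (A · b)).card = 1 := by
  simp [bdry]

theorem bdry_union_subset_s6 [DecidableEq L] [DecidableEq R] (I K : Finset L) :
    bdry A (K ∪ I) ⊆ nbhd A K ∪ bdry A I := by
  intro b hb
  obtain ⟨a, ha⟩ := card_eq_one.mp (mem_bdry.mp hb)
  have haKI : a ∈ K ∪ I ∧ A a b := mem_filter.mp (ha ▸ mem_singleton_self a)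
  by_cases haK : a ∈ K
  · exact mem_union_left _ (mem_nbhd.mpr ⟨a, haK, haKI.2⟩)
  · have haI : a ∈ I := (mem_union.mp haKI.1).resolve_left haK
    have hsub : I.filter (A · b) ⊆ {a} := ha ▸ filter_subset_filter _ subset_union_right
    refine mem_union_right _ (mem_bdry.mpr ?_)
    rw [Finset.Subset.antisymm hsub (singleton_subset_iff.mpr (mem_filter.mpr ⟨haI, haKI.2⟩)),
      card_singleton]

theorem bdry_inter_nbhd_subset_bdry [DecidableEq R] {I I' : Finset L} (h : I ⊆ I') :
    bdry A I' ∩ nbhd A I ⊆ bdry A I := by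
  intro b hb
  obtain ⟨hb', hbN⟩ := mem_inter.mp hb
  obtain ⟨a, haI, hab⟩ := mem_nbhd.mp hbN
  have hle : (I.filter (A · b)).card ≤ 1 :=
    (mem_bdry.mp hb') ▸ card_le_card (filter_subset_filter _ h)
  have hpos : 0 < (I.filter (A · b)).card := card_pos.mpr ⟨a, mem_filter.mpr ⟨haI, hab⟩⟩
  exact mem_bdry.mpr (by omega)

variable {r : ℕ}

theorem IsContained.two_mul_card_le {Δ : ℕ} {c : ℝ} (hc : 0 < c)
    (hexp : IsWeakExpander A r Δ c) {E : Finset R} (hE : (E.card : ℝ) ≤ c * r / 2)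
    {K : Finset L} (hK : IsContained A r E K) :
    2 * K.card ≤ r := by
  by_contra! hlarge
  have hbig : (r : ℝ) / 2 < K.card := by
    rw [div_lt_iff₀ two_pos]; exact_mod_cast (by omega : r < K.card * 2)
  have hbdry : ((bdry A K).card : ℝ) ≤ E.card := by exact_mod_cast card_le_card hK.2
  nlinarith [hexp.2.2 K hbig hK.1]

theorem IsClosure.eq_of_subset {J : Finset R} {I I' : Finset L} (hI : IsClosure A r J I)
    (hII' : I ⊆ I') (hI' : IsContained A r J I') : I' = I :=
  (eq_of_subset_of_card_le hII' (hI.2 I' hI')).symm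

theorem IsClosure.subset_of_nbhd_subset [DecidableEq L] [DecidableEq R] {E : Finset R}
    {I K : Finset L} (hI : IsClosure A r E I) (hKE : nbhd A K ⊆ E)
    (hcard : K.card + I.card ≤ r) : K ⊆ I := by
  have hunion : IsContained A r E (K ∪ I) :=
    ⟨(card_union_le K I).trans hcard,
      (bdry_union_subset_s6 I K).trans (union_subset hKE hI.1.2)⟩
  exact subset_union_left.trans (hI.eq_of_subset subset_union_right hunion).subset

end

/-- In an `(r, Δ, c)`-weak expander, if `|Ext(J)| ≤ cr/2` where
`Ext(J) = J ∪ N(Cl(J))`, then `Cl(Ext(J)) = Cl(J)`. -/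
theorem closure_of_extension (A : L → R → Prop) [∀ a b, Decidable (A a b)]
    (r Δ : ℕ) (c : ℝ) (hc : 0 < c)
    (hexp : IsWeakExpander A r Δ c)
    (J : Finset R) (I : Finset L) (hI : IsClosure A r J I)
    (hext : ((J ∪ nbhd A I).card : ℝ) ≤ c * r / 2)
    (I' : Finset L) (hI' : IsClosure A r (J ∪ nbhd A I) I') :
    I' = I := by
  have hIE : IsContained A r (J ∪ nbhd A I) I := ⟨hI.1.1, hI.1.2.trans subset_union_left⟩
  have hIsmall := hIE.two_mul_card_le hc hexp hext
  have hI'small := hI'.1.two_mul_card_le hc hexp hext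
  have hII' : I ⊆ I' := hI'.subset_of_nbhd_subset subset_union_right (by omega)
  refine hI.eq_of_subset hII' ⟨hI'.1.1, fun b hb => ?_⟩
  rcases mem_union.mp (hI'.1.2 hb) with hbJ | hbN
  · exact hbJ
  · exact hI.1.2 (bdry_inter_nbhd_subset_bdry hII' (mem_inter.mpr ⟨hb, hbN⟩))
end
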